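/- Let N ≥ 2 and K ≥ 1, and let (w, P) be a configuration with confidence e. Then the Gini index impurity satisfies ∑_{k ∈ Fin K} w k · ∑_{i ∈ Fin N} P k i · (1 − P k i) ≥ 1 − e. (Specialization of the paper's Theorem 4 to the Gini impurity f(x) = x(1−x), l(x) = 1−x.) -/

import Mathlib

/-!
Since `∑ i, p i ^ 2 ≤ (max p) * ∑ i, p i = max p`, the impurity `1 - ∑ i, p i ^ 2` of each
conditional distribution is at least `1 - max p`; averaging with the weights `w` gives `1 - e`.
-/

open Finset

/-- The maximum of a real-valued vector over the finite index set `Fin N` (`N > 0`). -/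
noncomputable def colMax {N : ℕ} (hN : 0 < N) (v : Fin N → ℝ) : ℝ :=
  Finset.univ.sup' (Finset.univ_nonempty_iff.mpr ⟨⟨0, hN⟩⟩) v

theorem le_colMax {N : ℕ} (hN : 0 < N) (v : Fin N → ℝ) (i : Fin N) : v i ≤ colMax hN v :=
  le_sup' v (mem_univ i)

section OrderedRing

variable {R ι κ : Type*} [CommRing R] [PartialOrder R] [IsOrderedRing R] [Fintype ι] [Fintype κ]

theorem sum_mul_self_le_of_le {p : ι → R} {M : R} (hp : ∀ i, 0 ≤ p i) (hM : ∀ i, p i ≤ M) :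
    ∑ i, p i * p i ≤ M * ∑ i, p i := by
  rw [mul_sum]
  exact sum_le_sum fun i _ => mul_le_mul_of_nonneg_right (hM i) (hp i)

theorem one_sub_le_sum_mul_one_sub {p : ι → R} {M : R} (hp : ∀ i, 0 ≤ p i)
    (hps : ∑ i, p i = 1) (hM : ∀ i, p i ≤ M) :
    1 - M ≤ ∑ i, p i * (1 - p i) := by
  have hsq := sum_mul_self_le_of_le hp hM
  rw [hps, mul_one] at hsq
  simp only [mul_sub, mul_one, sum_sub_distrib, hps]
  exact sub_le_sub_left hsq 1

theorem one_sub_sum_mul_le_sum_mul {w m f : κ → R} (hw : ∀ k, 0 ≤ w k) (hws : ∑ k, w k = 1)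
    (hf : ∀ k, 1 - m k ≤ f k) :
    1 - ∑ k, w k * m k ≤ ∑ k, w k * f k := by
  calc 1 - ∑ k, w k * m k = ∑ k, w k * (1 - m k) := by
        simp only [mul_sub, mul_one, sum_sub_distrib, hws]
    _ ≤ ∑ k, w k * f k := sum_le_sum fun k _ => mul_le_mul_of_nonneg_left (hf k) (hw k)

end OrderedRing

/-- Specialization of the paper's Theorem 4 to the Gini impurity: the Gini index
impurity of a configuration is at least `1 - e`, where `e` is its confidence. -/
theorem gini_impurity_lower_bound (N K : ℕ) (hN : 2 ≤ N)
    (w : Fin K → ℝ) (hw : ∀ k, 0 ≤ w k) (hws : ∑ k, w k = 1)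
    (P : Fin K → Fin N → ℝ) (hP : ∀ k i, 0 ≤ P k i) (hPs : ∀ k, ∑ i, P k i = 1)
    (e : ℝ) (he : e = ∑ k, w k * colMax (by omega) (P k)) :
    1 - e ≤ ∑ k, w k * ∑ i, P k i * (1 - P k i) := by
  subst he
  exact one_sub_sum_mul_le_sum_mul hw hws fun k =>
    one_sub_le_sum_mul_one_sub (hP k) (hPs k) (le_colMax _ (P k))
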